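/- arXiv:2003.12000 — 3 statements merged into one kernel-verified Lean document; each statement's English description precedes it below -/
import Mathlib

section
/- Let M be a connected n-manifold with boundary ∂M. If M is normal, ∂M is countably metacompact (as a topological space), and ∂M is collared in M, then ∂M is strongly collared in M. -/
open Set Topology unitInterval

variable {X : Type*} [TopologicalSpace X]

/-- `h : B × [0,1] → X` is a collar of `B` in `X`: an embedding with `h(x,0) = x`,
`h⁻¹(B) = B × {0}`, and `h(B × [0,1))` open in `X`. -/
def IsCollarMap (B : Set X) (h : B × I → X) : Prop :=
  Topology.IsEmbedding h ∧ (∀ x : B, h (x, 0) = (x : X)) ∧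
    h ⁻¹' B = {p : B × I | p.2 = 0} ∧ IsOpen (h '' {p : B × I | p.2 < 1})

/-- `B` is collared in `X`. -/
def IsCollared (B : Set X) : Prop := ∃ h : B × I → X, IsCollarMap B h

/-- `B` is strongly collared in `X`: the collar map can be chosen to be a closed map. -/
def IsStronglyCollared (B : Set X) : Prop :=
  ∃ h : B × I → X, IsCollarMap B h ∧ IsClosedMap h

/-- `x` has a neighbourhood homeomorphic to `ℝ^{n-1} × ℝ_{≥0}`. -/
def HasBoundaryChart (n : ℕ) (x : X) : Prop :=
  ∃ U : Set X, U ∈ nhds x ∧ Nonempty (U ≃ₜ ((Fin (n - 1) → ℝ) × {r : ℝ // 0 ≤ r}))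

/-- `x` has a neighbourhood homeomorphic to `ℝⁿ`. -/
def HasInteriorChart (n : ℕ) (x : X) : Prop :=
  ∃ U : Set X, U ∈ nhds x ∧ Nonempty (U ≃ₜ (Fin n → ℝ))

/-- An `n`-manifold with boundary: a Hausdorff space such that every point has a neighbourhood
homeomorphic to `ℝ^{n-1} × ℝ_{≥0}` (Hausdorffness is a separate instance hypothesis). -/
def IsManifoldWithBoundary (n : ℕ) (M : Type*) [TopologicalSpace M] : Prop :=
  ∀ x : M, HasBoundaryChart n x

/-- The boundary `∂M`: the points with no neighbourhood homeomorphic to `ℝⁿ`. -/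
def mBoundary (n : ℕ) (M : Type*) [TopologicalSpace M] : Set M :=
  {x : M | ¬ HasInteriorChart n x}

/-- A topological space is countably metacompact if every countable open cover has a
point-finite open refinement (which is still a cover). -/
def CountablyMetacompact (Y : Type*) [TopologicalSpace Y] : Prop :=
  ∀ 𝒰 : Set (Set Y), 𝒰.Countable → (∀ U ∈ 𝒰, IsOpen U) → ⋃₀ 𝒰 = univ →
    ∃ 𝒱 : Set (Set Y), (∀ V ∈ 𝒱, IsOpen V) ∧ ⋃₀ 𝒱 = univ ∧
      (∀ V ∈ 𝒱, ∃ U ∈ 𝒰, V ⊆ U) ∧ ∀ y : Y, {V ∈ 𝒱 | y ∈ V}.Finite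


/-! A collar `h` fails to be closed only because its image can accumulate at points outside it,
so it suffices to shorten its fibres. By normality choose an open `W ⊇ B` whose closure lies in
`h(B × [0,1))`. If `π : B → (0,1]` is continuous and `h(x, t) ∈ W` whenever `t ≤ π x`, then
`(x, t) ↦ h(x, t π x)` is again a collar, with image `h{t ≤ π x}`; the closure of that image stays
inside `W̄`, hence inside the range of the embedding `h`, so the image is closed and the new
collar is a closed embedding.

Such a `π` exists because `B` is normal and countably metacompact: the open sets
`U k = {x | h({x} × [0, 2⁻ᵏ]) ⊆ W}` cover `B`; take a point-finite refinement `V k ⊆ U k`,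
Urysohn functions `g k` supported in `V k` that jointly cover `B` with value `1` (shrinking lemma),
and `π = ∑ 2⁻ᵏ⁻¹ g k`. If `k` is the first index with `x ∈ V k`, then `π x ≤ 2⁻ᵏ` and `x ∈ U k`.
-/

theorem Topology.IsInducing.isClosed_image_of_closure_subset_range {Y : Type*}
    [TopologicalSpace Y] {f : Y → X} (hf : IsInducing f) {C : Set Y} (hC : IsClosed C)
    (hCf : closure (f '' C) ⊆ range f) : IsClosed (f '' C) := by
  rw [← closure_subset_iff_isClosed, ← image_preimage_eq_of_subset hCf,
    ← hf.closure_eq_preimage_closure_image, hC.closure_eq]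

theorem Topology.IsInducing.isOpen_image_of_subset {Y : Type*} [TopologicalSpace Y]
    {f : Y → X} (hf : IsInducing f) {A G : Set Y} (hA : IsOpen (f '' A)) (hG : IsOpen G)
    (hGA : G ⊆ A) : IsOpen (f '' G) := by
  obtain ⟨O, hO, rfl⟩ := hf.isOpen_iff.1 hG
  rw [← inter_eq_right.2 hGA, image_inter_preimage]
  exact hA.inter hO

theorem isOpen_setOf_forall_mem_prod {Y Z : Type*} [TopologicalSpace Y] [TopologicalSpace Z]
    [CompactSpace Z] {O : Set (Y × Z)} (hO : IsOpen O) {C : Set Z} (hC : IsClosed C) :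
    IsOpen {y | ∀ z ∈ C, (y, z) ∈ O} := by
  have : {y | ∀ z ∈ C, (y, z) ∈ O} = (Prod.fst '' (Oᶜ ∩ univ ×ˢ C))ᶜ := by
    ext y; simp [imp_not_comm]
  rw [this]
  exact (isClosedMap_fst_of_compactSpace _
    (hO.isClosed_compl.inter (isClosed_univ.prod hC))).isOpen_compl

theorem unitInterval.exists_forall_le_half_pow_mem {N : Set I} (hN : N ∈ 𝓝 0) :
    ∃ k : ℕ, ∀ t : I, (t : ℝ) ≤ (1 / 2) ^ k → t ∈ N := by
  obtain ⟨ε, hε, hball⟩ := Metric.mem_nhds_iff.1 hN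
  obtain ⟨k, hk⟩ := exists_pow_lt_of_lt_one hε (by norm_num : (1 / 2 : ℝ) < 1)
  refine ⟨k, fun t ht => hball ?_⟩
  rw [Metric.mem_ball, Subtype.dist_eq, Icc.coe_zero, dist_zero_right, Real.norm_of_nonneg t.2.1]
  exact ht.trans_lt hk

theorem tsum_half_pow_mul_le {a : ℕ → ℝ} (ha0 : ∀ j, 0 ≤ a j) (ha1 : ∀ j, a j ≤ 1) {k : ℕ}
    (hak : ∀ j < k, a j = 0) : ∑' j, (1 / 2 : ℝ) ^ (j + 1) * a j ≤ (1 / 2) ^ k := by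
  have hsum : Summable fun j => (1 / 2 : ℝ) ^ (j + 1) * a j :=
    .of_nonneg_of_le (fun j => mul_nonneg (by positivity) (ha0 j))
      (fun j => mul_le_of_le_one_right (by positivity) (ha1 j))
      ((summable_geometric_two.mul_left (1 / 2)).congr fun j => by ring)
  rw [← hsum.sum_add_tsum_nat_add k, Finset.sum_eq_zero fun j hj => by
    rw [hak j (Finset.mem_range.1 hj), mul_zero], zero_add]
  calc ∑' j, (1 / 2 : ℝ) ^ (j + k + 1) * a (j + k)
      ≤ ∑' j : ℕ, (1 / 2 : ℝ) ^ k / 2 / 2 ^ j :=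
        ((summable_nat_add_iff k).2 hsum).tsum_le_tsum
          (fun j => by
            rw [show (1 / 2 : ℝ) ^ k / 2 / 2 ^ j = (1 / 2) ^ (j + k + 1) by
              simp only [one_div, inv_pow, pow_add, pow_one]; ring]
            exact mul_le_of_le_one_right (by positivity) (ha1 _))
          (summable_geometric_two' _)
    _ = (1 / 2) ^ k := tsum_geometric_two' _

theorem CountablyMetacompact.exists_pointFinite_refinement {Y : Type*} [TopologicalSpace Y]
    (hY : CountablyMetacompact Y) {U : ℕ → Set Y} (hUo : ∀ k, IsOpen (U k))
    (hUcov : ⋃ k, U k = univ) :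
    ∃ V : ℕ → Set Y, (∀ k, IsOpen (V k)) ∧ (∀ k, V k ⊆ U k) ∧ ⋃ k, V k = univ ∧
      ∀ y, {k | y ∈ V k}.Finite := by
  obtain ⟨𝒱, h𝒱o, h𝒱cov, h𝒱U, h𝒱fin⟩ :=
    hY (range U) (countable_range U) (forall_mem_range.2 hUo) (by rwa [sUnion_range])
  choose! κ hκ using fun V hV => exists_range_iff.1 (h𝒱U V hV)
  refine ⟨fun k => ⋃ V ∈ {V ∈ 𝒱 | κ V = k}, V, fun k => isOpen_biUnion fun V hV => h𝒱o V hV.1,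
    fun k => iUnion₂_subset fun V hV => hV.2 ▸ hκ V hV.1, ?_, fun y => ?_⟩
  · refine eq_univ_of_forall fun y => ?_
    obtain ⟨V, hV, hyV⟩ := h𝒱cov ▸ mem_univ y
    exact mem_iUnion.2 ⟨κ V, mem_biUnion ⟨hV, rfl⟩ hyV⟩
  · refine ((h𝒱fin y).image κ).subset fun k hk => ?_
    obtain ⟨V, ⟨hV, rfl⟩, hyV⟩ := mem_iUnion₂.1 hk
    exact ⟨V, ⟨hV, hyV⟩, rfl⟩

theorem exists_continuous_pos_le_half_pow {Y : Type*} [TopologicalSpace Y] [NormalSpace Y]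
    {V : ℕ → Set Y} (hVo : ∀ k, IsOpen (V k)) (hVfin : ∀ y, {k | y ∈ V k}.Finite)
    (hVcov : ⋃ k, V k = univ) :
    ∃ π : Y → ℝ, Continuous π ∧ (∀ y, 0 < π y) ∧
      ∀ y k, (∀ j < k, y ∉ V j) → π y ≤ (1 / 2) ^ k := by
  obtain ⟨v, hvcov, -, hvV⟩ := exists_iUnion_eq_closure_subset hVo hVfin hVcov
  choose g hg0 hg1 hg01 using fun k => exists_continuous_zero_one_of_isClosed
    (hVo k).isClosed_compl isClosed_closure (disjoint_compl_left_iff_subset.2 (hvV k))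
  have hbound : ∀ k y, ‖(1 / 2 : ℝ) ^ (k + 1) * g k y‖ ≤ (1 / 2) ^ (k + 1) := fun k y => by
    rw [Real.norm_of_nonneg (mul_nonneg (by positivity) (hg01 k y).1)]
    exact mul_le_of_le_one_right (by positivity) (hg01 k y).2
  have hsum : Summable fun k => (1 / 2 : ℝ) ^ (k + 1) :=
    (summable_geometric_two.mul_left (1 / 2)).congr fun k => by ring
  refine ⟨fun y => ∑' k, (1 / 2 : ℝ) ^ (k + 1) * g k y,
    continuous_tsum (fun k => continuous_const.mul (g k).continuous) hsum hbound,
    fun y => ?_, fun y k hk => tsum_half_pow_mul_le (fun j => (hg01 j y).1)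
      (fun j => (hg01 j y).2) fun j hj => hg0 j (hk j hj)⟩
  obtain ⟨k, hk⟩ := mem_iUnion.1 (hvcov ▸ mem_univ y)
  refine (Summable.of_norm_bounded hsum (hbound · y)).tsum_pos
    (fun j => mul_nonneg (by positivity) (hg01 j y).1) k ?_
  rw [hg1 k (subset_closure hk), Pi.one_apply, mul_one]
  positivity

theorem exists_continuous_setOf_snd_le_subset {Y : Type*} [TopologicalSpace Y] [NormalSpace Y]
    (hY : CountablyMetacompact Y) {O : Set (Y × I)} (hO : IsOpen O) (hO0 : ∀ y, (y, 0) ∈ O) :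
    ∃ π : Y → ℝ, Continuous π ∧ (∀ y, π y ∈ Ioc 0 1) ∧ {p : Y × I | (p.2 : ℝ) ≤ π p.1} ⊆ O := by
  classical
  set U : ℕ → Set Y := fun k => {y | ∀ t ∈ {t : I | (t : ℝ) ≤ (1 / 2) ^ k}, (y, t) ∈ O}
  have hUo : ∀ k, IsOpen (U k) := fun k =>
    isOpen_setOf_forall_mem_prod hO (isClosed_le continuous_subtype_val continuous_const)
  have hUcov : ⋃ k, U k = univ := eq_univ_of_forall fun y => mem_iUnion.2 <|
    unitInterval.exists_forall_le_half_pow_mem <|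
      (hO.preimage (Continuous.prodMk_right y)).mem_nhds (hO0 y)
  obtain ⟨V, hVo, hVU, hVcov, hVfin⟩ := hY.exists_pointFinite_refinement hUo hUcov
  obtain ⟨π, hπc, hπ0, hπV⟩ := exists_continuous_pos_le_half_pow hVo hVfin hVcov
  refine ⟨π, hπc, fun y => ⟨hπ0 y, by simpa using hπV y 0 (by simp)⟩, fun ⟨y, t⟩ ht => ?_⟩
  have hyV : ∃ k, y ∈ V k := mem_iUnion.1 (hVcov ▸ mem_univ y)
  exact hVU _ (Nat.find_spec hyV) t
    (ht.trans (hπV y _ fun j hj => Nat.find_min hyV hj))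

/-- The fibrewise rescaling `(y, t) ↦ (y, t * π y)`, clamped to `I` so that it needs no
hypotheses on `π`. -/
noncomputable def fiberScale {Y : Type*} (π : Y → ℝ) (p : Y × I) : Y × I :=
  (p.1, projIcc 0 1 zero_le_one (p.2 * π p.1))

section fiberScale

variable {Y : Type*} {π : Y → ℝ}

theorem coe_fiberScale_snd {p : Y × I} (hp : (p.2 : ℝ) * π p.1 ∈ Icc 0 1) :
    ((fiberScale π p).2 : ℝ) = p.2 * π p.1 :=
  congrArg Subtype.val (projIcc_of_mem zero_le_one hp)

theorem mul_mem_Icc_of_mem_Ioc (hπ : ∀ y, π y ∈ Ioc 0 1) (p : Y × I) :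
    (p.2 : ℝ) * π p.1 ∈ Icc 0 1 :=
  ⟨mul_nonneg p.2.2.1 (hπ p.1).1.le, mul_le_one₀ p.2.2.2 (hπ p.1).1.le (hπ p.1).2⟩

theorem fiberScale_snd_eq_zero_iff (hπ : ∀ y, π y ∈ Ioc 0 1) {p : Y × I} :
    (fiberScale π p).2 = 0 ↔ p.2 = 0 := by
  rw [← Subtype.coe_inj, coe_fiberScale_snd (mul_mem_Icc_of_mem_Ioc hπ p), Icc.coe_zero,
    mul_eq_zero, or_iff_left (hπ p.1).1.ne', ← Icc.coe_zero, Subtype.coe_inj]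

theorem fiberScale_inv_fiberScale (hπ : ∀ y, π y ∈ Ioc 0 1) (p : Y × I) :
    fiberScale π⁻¹ (fiberScale π p) = p := by
  have h : ((fiberScale π p).2 : ℝ) * π⁻¹ p.1 = p.2 := by
    rw [coe_fiberScale_snd (mul_mem_Icc_of_mem_Ioc hπ p), Pi.inv_apply,
      mul_inv_cancel_right₀ (hπ p.1).1.ne']
  exact Prod.ext rfl <|
    Subtype.ext ((coe_fiberScale_snd (p := fiberScale π p) (h ▸ p.2.2)).trans h)

theorem fiberScale_fiberScale_inv (hπ : ∀ y, 0 < π y) {p : Y × I} (hp : (p.2 : ℝ) ≤ π p.1) :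
    fiberScale π (fiberScale π⁻¹ p) = p := by
  have hq : (p.2 : ℝ) * π⁻¹ p.1 ∈ Icc 0 1 :=
    ⟨mul_nonneg p.2.2.1 (inv_nonneg.2 (hπ p.1).le), by
      rwa [Pi.inv_apply, ← div_eq_mul_inv, div_le_one (hπ p.1)]⟩
  have h : ((fiberScale π⁻¹ p).2 : ℝ) * π p.1 = p.2 := by
    rw [coe_fiberScale_snd hq, Pi.inv_apply, inv_mul_cancel_right₀ (hπ p.1).ne']
  exact Prod.ext rfl <|
    Subtype.ext ((coe_fiberScale_snd (p := fiberScale π⁻¹ p) (h ▸ p.2.2)).trans h)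

theorem range_fiberScale (hπ : ∀ y, π y ∈ Ioc 0 1) :
    range (fiberScale π) = {p | (p.2 : ℝ) ≤ π p.1} := by
  refine subset_antisymm ?_ fun p hp => ⟨_, fiberScale_fiberScale_inv (fun y => (hπ y).1) hp⟩
  rintro _ ⟨p, rfl⟩
  rw [mem_ofPred_eq, coe_fiberScale_snd (mul_mem_Icc_of_mem_Ioc hπ p)]
  exact mul_le_of_le_one_left (hπ p.1).1.le p.2.2.2

theorem image_fiberScale_setOf_lt_one (hπ : ∀ y, π y ∈ Ioc 0 1) :
    fiberScale π '' {p | p.2 < 1} = {p | (p.2 : ℝ) < π p.1} := by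
  have h : {p : Y × I | p.2 < 1} = fiberScale π ⁻¹' {p | (p.2 : ℝ) < π p.1} := by
    ext p
    rw [mem_preimage, mem_ofPred_eq, mem_ofPred_eq,
      coe_fiberScale_snd (mul_mem_Icc_of_mem_Ioc hπ p)]
    exact (mul_lt_iff_lt_one_left (hπ p.1).1).symm
  rw [h, image_preimage_eq_inter_range, range_fiberScale hπ, inter_eq_left]
  exact fun p hp => le_of_lt (α := ℝ) hp

variable [TopologicalSpace Y]

theorem continuous_fiberScale (hπ : Continuous π) : Continuous (fiberScale π) :=
  continuous_fst.prodMk <| continuous_projIcc.comp <|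
    (continuous_subtype_val.comp continuous_snd).mul (hπ.comp continuous_fst)

theorem isEmbedding_fiberScale (hπc : Continuous π) (hπ : ∀ y, π y ∈ Ioc 0 1) :
    IsEmbedding (fiberScale π) := by
  have hinv : fiberScale π⁻¹ ∘ fiberScale π = id := funext (fiberScale_inv_fiberScale hπ)
  exact ⟨.of_comp (continuous_fiberScale hπc)
      (continuous_fiberScale (hπc.inv₀ fun y => (hπ y).1.ne')) (hinv ▸ .id),
    Function.LeftInverse.injective (fiberScale_inv_fiberScale hπ)⟩

end fiberScale

section IsCollarMap

variable {B : Set X} {h : B × I → X} {π : B → ℝ}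

theorem IsCollarMap.comp_fiberScale (hh : IsCollarMap B h) (hπc : Continuous π)
    (hπ : ∀ x, π x ∈ Ioc 0 1) : IsCollarMap B (h ∘ fiberScale π) := by
  obtain ⟨hemb, hzero, hpre, hopen⟩ := hh
  refine ⟨hemb.comp (isEmbedding_fiberScale hπc hπ), fun x => ?_, ?_, ?_⟩
  · rw [Function.comp_apply, ← hzero x]
    exact congrArg h (Prod.ext rfl ((fiberScale_snd_eq_zero_iff hπ).2 rfl))
  · rw [preimage_comp, hpre]
    exact ext fun p => fiberScale_snd_eq_zero_iff hπ
  · rw [image_comp, image_fiberScale_setOf_lt_one hπ]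
    refine hemb.isInducing.isOpen_image_of_subset hopen
      (isOpen_lt (continuous_subtype_val.comp continuous_snd) (hπc.comp continuous_fst))
      fun p hp => ?_
    exact unitInterval.coe_lt_one.1 (lt_of_lt_of_le (α := ℝ) hp (hπ p.1).2)

theorem IsCollarMap.isClosedMap_comp_fiberScale (hh : IsCollarMap B h) (hπc : Continuous π)
    (hπ : ∀ x, π x ∈ Ioc 0 1) (hcl : closure (h '' {p | (p.2 : ℝ) ≤ π p.1}) ⊆ range h) :
    IsClosedMap (h ∘ fiberScale π) := by
  refine (IsClosedEmbedding.mk (hh.comp_fiberScale hπc hπ).1 ?_).isClosedMap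
  rw [range_comp, range_fiberScale hπ]
  exact hh.1.isInducing.isClosed_image_of_closure_subset_range
    (isClosed_le (continuous_subtype_val.comp continuous_snd) (hπc.comp continuous_fst)) hcl

end IsCollarMap

theorem IsCollared.isStronglyCollared [NormalSpace X] {B : Set X} (hB : IsClosed B)
    (hBm : CountablyMetacompact B) (hcoll : IsCollared B) : IsStronglyCollared B := by
  obtain ⟨h, hh⟩ := hcoll
  obtain ⟨hemb, hzero, -, hopen⟩ := id hh
  have hBA : B ⊆ h '' {p | p.2 < 1} := fun x hx =>
    ⟨(⟨x, hx⟩, 0), show (0 : I) < 1 from zero_lt_one, hzero _⟩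
  obtain ⟨W, hWo, hBW, hWcl⟩ := normal_exists_closure_subset hB hopen hBA
  have : NormalSpace B := hB.isClosedEmbedding_subtypeVal.normalSpace
  obtain ⟨π, hπc, hπ, hπW⟩ := exists_continuous_setOf_snd_le_subset hBm
    (hWo.preimage hemb.continuous) fun x => by
      rw [mem_preimage, hzero]
      exact hBW x.2
  refine ⟨h ∘ fiberScale π, hh.comp_fiberScale hπc hπ, hh.isClosedMap_comp_fiberScale hπc hπ ?_⟩
  calc closure (h '' {p | (p.2 : ℝ) ≤ π p.1}) ⊆ closure W :=
        closure_mono (image_subset_iff.2 hπW)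
    _ ⊆ h '' {p | p.2 < 1} := hWcl
    _ ⊆ range h := image_subset_range _ _

theorem isClosed_mBoundary (n : ℕ) (M : Type*) [TopologicalSpace M] :
    IsClosed (mBoundary n M) :=
  isOpen_compl_iff.1 <| isOpen_iff_mem_nhds.2 fun _ hx => by
    obtain ⟨U, hU, he⟩ := not_not.1 hx
    exact (eventually_mem_nhds_iff.2 hU).mono fun _ hy hb => hb ⟨U, hy, he⟩

theorem boundary_stronglyCollared_of_normal_countablyMetacompact_general (n : ℕ) (M : Type*)
    [TopologicalSpace M] [NormalSpace M]
    (hcm : CountablyMetacompact ↥(mBoundary n M))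
    (hcoll : IsCollared (mBoundary n M)) :
    IsStronglyCollared (mBoundary n M) :=
  hcoll.isStronglyCollared (isClosed_mBoundary n M) hcm

/-- If `M` is a connected `n`-manifold with boundary, `M` is normal, `∂M` is countably
metacompact (as a space) and collared in `M`, then `∂M` is strongly collared in `M`. -/
theorem boundary_stronglyCollared_of_normal_countablyMetacompact (n : ℕ) (M : Type*)
    [TopologicalSpace M] [T2Space M] [NormalSpace M] [ConnectedSpace M]
    (hM : IsManifoldWithBoundary n M)
    (hcm : CountablyMetacompact ↥(mBoundary n M))
    (hcoll : IsCollared (mBoundary n M)) :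
    IsStronglyCollared (mBoundary n M) :=
  boundary_stronglyCollared_of_normal_countablyMetacompact_general n M hcm hcoll
end

section
/- Let M be a normal Hausdorff space and B a closed subset of M which is countably metacompact (as a topological space) and collared in M. Then B is strongly collared in M. -/
open Set Topology unitInterval

variable {X : Type*} [TopologicalSpace X]

/-!
A collar `h` becomes closed after squeezing each fibre: if `f : B → (0, 1]` is continuous and `h`
maps the subgraph `{(x, t) | t ≤ f x}` into a set `G` whose closure lies in `h (B × [0, 1))`,
then `(x, t) ↦ h (x, t * f x)` is still a collar, and its range is closed because it is closed in
the range of `h` while its closure stays inside that range. Normality of `M` provides `G`.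
Countable metacompactness of `B` provides `f`: the open sets
`U n = {x | h ({x} × [0, 2⁻ⁿ]) ⊆ G}` increase to `B`, so they shrink to a closed cover `C n ⊆ U n`,
and `f = ∑ 2⁻ⁿ⁻¹ wₙ`, with Urysohn functions `wₙ` equal to `1` on `C n` and `0` off `U n`, is
positive and at most `2⁻ⁿ` outside `U 0 ∪ ⋯ ∪ U (n - 1)`.
-/

section GeneralTopology

variable {Y Z : Type*} [TopologicalSpace Y] [TopologicalSpace Z]

lemma isOpen_setOf_forall_prodMk_mem [CompactSpace Z] {W : Set (Y × Z)} (hW : IsOpen W)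
    {K : Set Z} (hK : IsClosed K) : IsOpen {y | ∀ z ∈ K, (y, z) ∈ W} := by
  have hcompl : {y | ∀ z ∈ K, (y, z) ∈ W} = (Prod.fst '' (Wᶜ ∩ univ ×ˢ K))ᶜ := by
    ext y
    simp [and_comm]
  rw [hcompl]
  exact (isClosedMap_fst_of_compactSpace _
    (hW.isClosed_compl.inter (isClosed_univ.prod hK))).isOpen_compl

lemma Topology.IsInducing.isOpen_image_of_subset_s10 {f : Y → Z} (hf : IsInducing f) {s t : Set Y}
    (ht : IsOpen (f '' t)) (hs : IsOpen s) (hst : s ⊆ t) : IsOpen (f '' s) := by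
  obtain ⟨O, hO, rfl⟩ := hf.isOpen_iff.1 hs
  have himage : f '' (f ⁻¹' O) = O ∩ f '' t := by
    refine (subset_inter (image_preimage_subset f O) (image_mono hst)).antisymm ?_
    rintro _ ⟨hO, y, -, rfl⟩
    exact mem_image_of_mem f hO
  rw [himage]
  exact hO.inter ht

lemma Topology.IsInducing.isClosed_image_of_closure_subset_range_s10 {f : Y → Z} (hf : IsInducing f)
    {s : Set Y} (hs : IsClosed s) (hcl : closure (f '' s) ⊆ range f) : IsClosed (f '' s) := by
  refine isClosed_of_closure_subset fun z hz => ?_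
  obtain ⟨y, rfl⟩ := hcl hz
  refine mem_image_of_mem f ?_
  rwa [← hs.closure_eq, hf.closure_eq_preimage_closure_image]

/-- One direction of Ishikawa's characterization of countable metacompactness. -/
lemma CountablyMetacompact.exists_isClosed_subset_iUnion_eq_univ
    (hcm : CountablyMetacompact Y) {U : ℕ → Set Y} (hU : ∀ n, IsOpen (U n))
    (hmono : Monotone U) (hcover : ⋃ n, U n = univ) :
    ∃ C : ℕ → Set Y, (∀ n, IsClosed (C n)) ∧ (∀ n, C n ⊆ U n) ∧ ⋃ n, C n = univ := by
  obtain ⟨𝒱, hVopen, hVcover, hVref, hVfin⟩ :=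
    hcm (range U) (countable_range U) (forall_mem_range.2 hU) (by rwa [sUnion_range])
  have hidx : ∀ V ∈ 𝒱, ∃ n, V ⊆ U n := fun V hV => by
    obtain ⟨_, ⟨n, rfl⟩, hVn⟩ := hVref V hV
    exact ⟨n, hVn⟩
  choose! idx hidx using hidx
  -- `C n`: the points all of whose members of `𝒱` have index `≤ n`; point-finiteness makes
  -- these cover `Y`.
  refine ⟨fun n => (⋃₀ {V ∈ 𝒱 | n < idx V})ᶜ,
    fun n => (isOpen_sUnion fun V hV => hVopen V hV.1).isClosed_compl, ?_, ?_⟩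
  · intro n y hy
    obtain ⟨V, hV, hyV⟩ := mem_sUnion.1 (hVcover ▸ mem_univ y)
    exact hmono (not_lt.1 fun hn => hy ⟨V, ⟨hV, hn⟩, hyV⟩) (hidx V hV hyV)
  · refine eq_univ_of_forall fun y => mem_iUnion.2 ⟨(hVfin y).toFinset.sup idx, ?_⟩
    rintro ⟨V, ⟨hV, hlt⟩, hyV⟩
    exact hlt.not_ge (Finset.le_sup ((hVfin y).mem_toFinset.2 ⟨hV, hyV⟩))

lemma exists_continuous_pos_le_inv_two_pow [NormalSpace Y] {U C : ℕ → Set Y}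
    (hU : ∀ n, IsOpen (U n)) (hC : ∀ n, IsClosed (C n)) (hCU : ∀ n, C n ⊆ U n)
    (hcover : ⋃ n, C n = univ) :
    ∃ f : Y → ℝ, Continuous f ∧ (∀ y, 0 < f y) ∧
      ∀ n y, (∀ m < n, y ∉ U m) → f y ≤ 2⁻¹ ^ n := by
  have hw : ∀ n, ∃ w : C(Y, ℝ), EqOn w 0 (U n)ᶜ ∧ EqOn w 1 (C n) ∧ ∀ y, w y ∈ Icc (0 : ℝ) 1 :=
    fun n => exists_continuous_zero_one_of_isClosed (hU n).isClosed_compl (hC n)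
      (disjoint_compl_left.mono_right (hCU n))
  choose w hw0 hw1 hw01 using hw
  have hgeom : Summable fun n : ℕ => (2⁻¹ : ℝ) ^ n :=
    summable_geometric_of_lt_one (by norm_num) (by norm_num)
  have hterm_nonneg : ∀ n y, 0 ≤ (2⁻¹ : ℝ) ^ (n + 1) * w n y := fun n y =>
    mul_nonneg (by positivity) (hw01 n y).1
  have hterm_le : ∀ n y, (2⁻¹ : ℝ) ^ (n + 1) * w n y ≤ 2⁻¹ * 2⁻¹ ^ n := fun n y => by
    rw [pow_succ']
    exact mul_le_of_le_one_right (by positivity) (hw01 n y).2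
  have hsum : ∀ y, Summable fun n => (2⁻¹ : ℝ) ^ (n + 1) * w n y := fun y =>
    (hgeom.mul_left 2⁻¹).of_nonneg_of_le (hterm_nonneg · y) (hterm_le · y)
  refine ⟨fun y => ∑' n, (2⁻¹ : ℝ) ^ (n + 1) * w n y, ?_, fun y => ?_, fun n y hy => ?_⟩
  · refine continuous_tsum (fun n => continuous_const.mul (w n).continuous)
      (hgeom.mul_left 2⁻¹) fun n y => ?_
    rw [Real.norm_of_nonneg (hterm_nonneg n y)]
    exact hterm_le n y
  · obtain ⟨n, hn⟩ := mem_iUnion.1 (hcover ▸ mem_univ y)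
    refine (hsum y).tsum_pos (hterm_nonneg · y) n ?_
    rw [hw1 n hn]
    norm_num
  · have hbound : ∀ m, (2⁻¹ : ℝ) ^ (m + 1) * w m y ≤ 2⁻¹ * ite (n ≤ m) (2⁻¹ ^ m) 0 := by
      intro m
      split_ifs with hnm
      · exact hterm_le m y
      · rw [hw0 m (hy m (not_le.1 hnm))]
        simp
    have hite : Summable fun m : ℕ => ite (n ≤ m) ((2⁻¹ : ℝ) ^ m) 0 :=
      hgeom.of_nonneg_of_le (fun m => by split_ifs <;> positivity)
        (fun m => by split_ifs <;> simp)
    calc ∑' m, (2⁻¹ : ℝ) ^ (m + 1) * w m y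
        ≤ ∑' m, 2⁻¹ * ite (n ≤ m) ((2⁻¹ : ℝ) ^ m) 0 :=
          (hsum y).tsum_le_tsum hbound (hite.mul_left 2⁻¹)
      _ = 2⁻¹ ^ n := by
          rw [tsum_mul_left, tsum_geometric_inv_two_ge]
          ring

lemma CountablyMetacompact.exists_continuous_pos_subgraph_subset [NormalSpace Y]
    (hcm : CountablyMetacompact Y) {W : Set (Y × I)} (hW : IsOpen W) (hW0 : ∀ y, (y, 0) ∈ W) :
    ∃ f : Y → I, Continuous f ∧ (∀ y, 0 < f y) ∧ ∀ y t, t ≤ f y → (y, t) ∈ W := by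
  set U : ℕ → Set Y := fun n => {y | ∀ t ∈ {t : I | (t : ℝ) ≤ 2⁻¹ ^ n}, (y, t) ∈ W}
  have hU : ∀ n, IsOpen (U n) := fun n =>
    isOpen_setOf_forall_prodMk_mem hW (isClosed_le continuous_subtype_val continuous_const)
  have hmono : Monotone U := fun m n hmn y hy t ht =>
    hy t (le_trans ht (pow_le_pow_of_le_one (by norm_num : (0 : ℝ) ≤ 2⁻¹) (by norm_num) hmn))
  have hmem : ∀ y, ∃ n, y ∈ U n := by
    intro y
    have hnhds : ∀ᶠ t in 𝓝 (0 : I), (y, t) ∈ W :=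
      (Continuous.prodMk_right y).continuousAt.preimage_mem_nhds (hW.mem_nhds (hW0 y))
    obtain ⟨δ, hδ, hball⟩ := Metric.eventually_nhds_iff.1 hnhds
    obtain ⟨n, hn⟩ := exists_pow_lt_of_lt_one hδ (by norm_num : (2⁻¹ : ℝ) < 1)
    refine ⟨n, fun t (ht : (t : ℝ) ≤ 2⁻¹ ^ n) => hball ?_⟩
    rw [Subtype.dist_eq, Icc.coe_zero, dist_zero_right, Real.norm_of_nonneg t.2.1]
    exact ht.trans_lt hn
  obtain ⟨C, hC, hCU, hCcover⟩ := hcm.exists_isClosed_subset_iUnion_eq_univ hU hmono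
    (eq_univ_of_forall fun y => mem_iUnion.2 (hmem y))
  obtain ⟨g, hg, hgpos, hgle⟩ := exists_continuous_pos_le_inv_two_pow hU hC hCU hCcover
  classical
  have hgfind : ∀ y, g y ≤ 2⁻¹ ^ Nat.find (hmem y) := fun y =>
    hgle _ y fun m hm => Nat.find_min (hmem y) hm
  have hg1 : ∀ y, g y ≤ 1 := fun y =>
    (hgfind y).trans (pow_le_one₀ (by norm_num) (by norm_num))
  refine ⟨fun y => ⟨g y, (hgpos y).le, hg1 y⟩, hg.subtype_mk _, hgpos, fun y t ht => ?_⟩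
  exact Nat.find_spec (hmem y) t ((show (t : ℝ) ≤ g y from ht).trans (hgfind y))

end GeneralTopology

section Rescale

variable {Y : Type*} {f : Y → I}

lemma unitInterval.exists_mul_eq_of_le {a b : I} (ha : 0 < a) (hba : b ≤ a) :
    ∃ t : I, t * a = b :=
  ⟨⟨b / a, div_nonneg b.2.1 a.2.1, (div_le_one (coe_pos.2 ha)).2 hba⟩,
    Subtype.ext (div_mul_cancel₀ _ (coe_pos.2 ha).ne')⟩

def rescale (f : Y → I) (p : Y × I) : Y × I := (p.1, p.2 * f p.1)

lemma range_rescale (hpos : ∀ y, 0 < f y) : range (rescale f) = {p | p.2 ≤ f p.1} := by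
  refine (range_subset_iff.2 fun p =>
    show (rescale f p).2 ≤ f (rescale f p).1 from mul_le_right).antisymm ?_
  rintro ⟨y, u⟩ (hu : u ≤ f y)
  obtain ⟨t, rfl⟩ := unitInterval.exists_mul_eq_of_le (hpos y) hu
  exact ⟨(y, t), rfl⟩

lemma rescale_image_setOf_lt_one (hpos : ∀ y, 0 < f y) :
    rescale f '' {p | p.2 < 1} = {p | p.2 < f p.1} := by
  refine (image_subset_iff.2 fun p hp => ?_).antisymm ?_
  · exact mul_lt_of_lt_one_left (hpos p.1) (show p.2 < 1 from hp)
  rintro ⟨y, u⟩ (hu : u < f y)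
  obtain ⟨t, rfl⟩ := unitInterval.exists_mul_eq_of_le (hpos y) hu.le
  refine ⟨(y, t), lt_of_le_of_ne le_one' ?_, rfl⟩
  rintro rfl
  exact hu.ne (one_mul _)

lemma rescale_preimage_setOf_eq_zero (hpos : ∀ y, 0 < f y) :
    rescale f ⁻¹' {p | p.2 = 0} = {p | p.2 = 0} := by
  ext p
  simp [rescale, (hpos p.1).ne']

lemma isEmbedding_rescale [TopologicalSpace Y] (hf : Continuous f) (hpos : ∀ y, 0 < f y) :
    IsEmbedding (rescale f) := by
  let unscale : Y × I → Y × I := fun p => (p.1, projIcc 0 1 zero_le_one (p.2 / f p.1))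
  have hunscale : Continuous unscale := continuous_fst.prodMk <| continuous_projIcc.comp <|
    (continuous_subtype_val.comp continuous_snd).div (continuous_subtype_val.comp
      (hf.comp continuous_fst)) fun p => (coe_pos.2 (hpos p.1)).ne'
  refine Function.LeftInverse.isEmbedding (f := unscale) (fun p => ?_) hunscale
    (continuous_fst.prodMk (by fun_prop))
  simp only [rescale, unscale, Icc.coe_mul, mul_div_cancel_right₀ _ (coe_pos.2 (hpos p.1)).ne',
    projIcc_val]

end Rescale

section Collar

variable {B : Set X} {h : B × I → X} {f : B → I}

lemma IsCollarMap.comp_rescale (hh : IsCollarMap B h) (hf : Continuous f)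
    (hpos : ∀ x, 0 < f x) : IsCollarMap B (h ∘ rescale f) := by
  obtain ⟨hemb, hzero, hpre, hopen⟩ := hh
  refine ⟨hemb.comp (isEmbedding_rescale hf hpos), fun x => by simp [rescale, hzero], ?_, ?_⟩
  · rw [preimage_comp, hpre, rescale_preimage_setOf_eq_zero hpos]
  · rw [image_comp, rescale_image_setOf_lt_one hpos]
    refine hemb.isInducing.isOpen_image_of_subset_s10 hopen
      (isOpen_lt (by fun_prop) (hf.comp continuous_fst)) fun p hp => ?_
    exact hp.trans_le le_one'

lemma IsCollarMap.isClosedMap_comp_rescale (hh : IsCollarMap B h) (hf : Continuous f)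
    (hpos : ∀ x, 0 < f x) {G : Set X} (hG : closure G ⊆ h '' {p | p.2 < 1})
    (hfG : ∀ x t, t ≤ f x → h (x, t) ∈ G) : IsClosedMap (h ∘ rescale f) := by
  refine (IsClosedEmbedding.mk (hh.1.comp (isEmbedding_rescale hf hpos)) ?_).isClosedMap
  rw [range_comp, range_rescale hpos]
  refine hh.1.isInducing.isClosed_image_of_closure_subset_range_s10
    (isClosed_le (by fun_prop) (hf.comp continuous_fst)) ?_
  calc closure (h '' {p | p.2 ≤ f p.1})
      ⊆ closure G := closure_mono (image_subset_iff.2 fun p hp => hfG p.1 p.2 hp)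
    _ ⊆ h '' {p | p.2 < 1} := hG
    _ ⊆ range h := image_subset_range h _

end Collar

theorem stronglyCollared_of_collared_countablyMetacompact_general {M : Type*} [TopologicalSpace M]
    [NormalSpace M] (B : Set M) (hB : IsClosed B)
    (hcm : CountablyMetacompact ↥B) (hcoll : IsCollared B) :
    IsStronglyCollared B := by
  obtain ⟨h, hh⟩ := hcoll
  have ⟨hemb, hzero, _, hopen⟩ := hh
  have hBU : B ⊆ h '' {p | p.2 < 1} := fun b hb =>
    ⟨(⟨b, hb⟩, 0), show (0 : I) < 1 from zero_lt_one, hzero _⟩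
  obtain ⟨G, hGopen, hBG, hGcl⟩ := normal_exists_closure_subset hB hopen hBU
  have : NormalSpace B := hB.isClosedEmbedding_subtypeVal.normalSpace
  obtain ⟨f, hf, hpos, hfG⟩ := hcm.exists_continuous_pos_subgraph_subset
    (hGopen.preimage hemb.continuous) fun x => by simpa [hzero] using hBG x.2
  exact ⟨h ∘ rescale f, hh.comp_rescale hf hpos, hh.isClosedMap_comp_rescale hf hpos hGcl hfG⟩

/-- If `B` is a closed subset of a normal Hausdorff space `M` which is countably metacompact
(as a space) and collared in `M`, then `B` is strongly collared in `M`. -/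
theorem stronglyCollared_of_collared_countablyMetacompact {M : Type*} [TopologicalSpace M]
    [T2Space M] [NormalSpace M] (B : Set M) (hB : IsClosed B)
    (hcm : CountablyMetacompact ↥B) (hcoll : IsCollared B) :
    IsStronglyCollared B :=
  stronglyCollared_of_collared_countablyMetacompact_general B hB hcm hcoll
end

section
/- Let L₊ be the open long ray. If U is an open subset of L₊ × [0,1] and a ∈ [0,1] is such that {α ∈ ω₁ : ⟨α,a⟩ ∈ U} is stationary in ω₁, then there are α ∈ ω₁ and n ∈ ω, n ≥ 1, such that U contains [α,ω₁) × ((a − 1/n, a + 1/n) ∩ [0,1]), where [α,ω₁) denotes the set of points of L₊ that are ≥ α. -/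
open Set Topology

noncomputable section

def omega1 : Ordinal := (Cardinal.aleph 1).ord

abbrev Omega1 := ↥(Set.Iio omega1)

abbrev ClosedLongRay := Omega1 ×ₗ ↥(Set.Ico (0 : ℝ) 1)

instance : TopologicalSpace ClosedLongRay := Preorder.topology ClosedLongRay
instance : OrderTopology ClosedLongRay := ⟨rfl⟩

theorem omega1_pos : (0 : Ordinal) < omega1 := by
  rw [omega1, ← Cardinal.ord_zero]
  exact Cardinal.ord_lt_ord.mpr (Cardinal.aleph_pos 1)

def longRayZero : ClosedLongRay :=
  toLex (⟨0, omega1_pos⟩, ⟨0, by norm_num⟩)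

abbrev LongRayPlus := {x : ClosedLongRay // x ≠ longRayZero}

def ordPt (α : Omega1) : ClosedLongRay := toLex (α, ⟨0, by norm_num⟩)

/-- A subset of `ω₁` is closed and unbounded (club) if it is unbounded and contains every
nonzero ordinal which is a limit of its elements. -/
def IsClub' (C : Set Omega1) : Prop :=
  (∀ α : Omega1, ∃ β ∈ C, α < β) ∧
    ∀ α : Omega1, 0 < α.1 → (∀ β : Omega1, β < α → ∃ γ ∈ C, β < γ ∧ γ < α) → α ∈ C

/-- A subset of `ω₁` is stationary if it meets every club subset of `ω₁`. -/
def IsStationary' (S : Set Omega1) : Prop :=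
  ∀ C : Set Omega1, IsClub' C → (S ∩ C).Nonempty

/-!
Suppose not, and for every `α < ω₁` and `n` pick a point `(x, t) ∉ U` with `x ≥ α` and
`|t - a| < 1/(n+1)`. Countably many such points lie below some `f α < ω₁`, and the ordinals
closed under `f` form a club, so stationarity gives `γ` in that club with `(γ, a) ∈ U`.
Openness of `U` yields a box `(β, γ] × (a - 1/(n+1), a + 1/(n+1)) ⊆ U` with `β < γ`; the
counterexamples indexed by `f β` lie in this box, a contradiction.
-/

theorem cof_omega1 : omega1.cof = Cardinal.aleph 1 :=
  Cardinal.isRegular_aleph_one.cof_ord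

theorem succ_lt_omega1 {o : Ordinal} (ho : o < omega1) : Order.succ o < omega1 :=
  (Cardinal.isSuccLimit_ord (Cardinal.aleph0_le_aleph 1)).succ_lt ho

theorem iSup_lt_omega1 {ι : Type*} [Countable ι] {s : ι → Ordinal} (hs : ∀ i, s i < omega1) :
    ⨆ i, s i < omega1 := by
  refine Ordinal.lift_iSup_lt_of_lt_cof ?_ hs
  rw [← Ordinal.lift_cof, cof_omega1, Cardinal.lift_aleph, Ordinal.lift_one]
  exact (Cardinal.lift_le_aleph0.2 Cardinal.mk_le_aleph0).trans_lt Cardinal.aleph0_lt_aleph_one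

theorem countable_Iio_of_lt_omega1 {o : Ordinal} (ho : o < omega1) : (Set.Iio o).Countable := by
  rw [← Cardinal.le_aleph0_iff_set_countable, Cardinal.mk_Iio_ordinal, Cardinal.lift_le_aleph0,
    ← Cardinal.lt_aleph_one_iff, ← Cardinal.lt_ord]
  exact ho

namespace Omega1

theorem bddAbove_range_val {ι : Type*} (s : ι → Omega1) :
    BddAbove (Set.range fun i => (s i : Ordinal)) :=
  ⟨omega1, by rintro _ ⟨i, rfl⟩; exact (s i).2.le⟩

theorem countable_Iic (γ : Omega1) : (Set.Iic γ).Countable := by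
  rw [← Set.Iio_insert]
  exact ((countable_Iio_of_lt_omega1 γ.2).preimage Subtype.val_injective).insert γ

theorem exists_gt_of_countable {ι : Type*} [Countable ι] (s : ι → Omega1) :
    ∃ γ : Omega1, ∀ i, s i < γ := by
  have hsucc (i : ι) : Order.succ (s i : Ordinal) < omega1 := succ_lt_omega1 (s i).2
  refine ⟨⟨_, iSup_lt_omega1 hsucc⟩, fun i => ?_⟩
  have hbdd : BddAbove (Set.range fun i => Order.succ (s i : Ordinal)) :=
    ⟨omega1, by rintro _ ⟨j, rfl⟩; exact (hsucc j).le⟩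
  exact (Order.lt_succ (s i : Ordinal)).trans_le (le_ciSup hbdd i)

def closurePoints (f : Omega1 → Omega1) : Set Omega1 := {γ | ∀ β < γ, f β < γ}

theorem isClub'_closurePoints (f : Omega1 → Omega1) : IsClub' (closurePoints f) := by
  refine ⟨fun α => ?_, fun α _ hα β hβ => ?_⟩
  · -- `F γ` exceeds `γ` and every `f β` with `β ≤ γ`; the closure point is `⨆ k, F^[k] α`.
    choose F hF using fun γ : Omega1 =>
      have := (countable_Iic γ).to_subtype
      exists_gt_of_countable (ι := Option (Set.Iic γ)) fun i => i.elim γ fun β => f β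
    let s : ℕ → Omega1 := fun k => F^[k] α
    have hs (k : ℕ) : (s k : Ordinal) ≤ ⨆ k, (s k : Ordinal) := le_ciSup (bddAbove_range_val s) k
    refine ⟨⟨_, iSup_lt_omega1 fun k => (s k).2⟩, fun β hβ => ?_, ?_⟩
    · obtain ⟨k, hk⟩ := (lt_ciSup_iff (bddAbove_range_val s)).1 (Subtype.coe_lt_coe.2 hβ)
      have hβk : f β < s (k + 1) := by
        simp only [s, Function.iterate_succ_apply']
        exact hF _ (some ⟨β, hk.le⟩)
      exact Subtype.coe_lt_coe.1 ((Subtype.coe_lt_coe.2 hβk).trans_le (hs (k + 1)))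
    · exact Subtype.coe_lt_coe.1 ((Subtype.coe_lt_coe.2 (hF α none)).trans_le (hs 1))
  · obtain ⟨γ, hγ, hβγ, hγα⟩ := hα β hβ
    exact (hγ β hβγ).trans hγα

end Omega1

theorem ordPt_le_iff {α : Omega1} {x : ClosedLongRay} : ordPt α ≤ x ↔ α ≤ (ofLex x).1 := by
  rw [ordPt, Prod.Lex.le_iff, le_iff_lt_or_eq (a := α)]
  exact or_congr_right (and_iff_left (ofLex x).2.2.1)

theorem lt_ordPt_iff {α : Omega1} {x : ClosedLongRay} : x < ordPt α ↔ (ofLex x).1 < α := by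
  simpa only [not_le] using ordPt_le_iff.not

theorem longRayZero_le (x : ClosedLongRay) : longRayZero ≤ x :=
  ordPt_le_iff.2 (Subtype.coe_le_coe.1 zero_le)

theorem exists_forall_mem_of_mem_isOpen {U : Set (LongRayPlus × unitInterval)} (hU : IsOpen U)
    {γ : Omega1} (hγ : ordPt γ ≠ longRayZero) {a : unitInterval} (hγa : (⟨ordPt γ, hγ⟩, a) ∈ U) :
    ∃ β < γ, ∃ n : ℕ, ∀ (x : LongRayPlus) (t : unitInterval),
      β < (ofLex x.1).1 → (ofLex x.1).1 < γ → |(t : ℝ) - a| < 1 / (n + 1) → (x, t) ∈ U := by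
  obtain ⟨v, w, hv, hw, hγv, haw, hvw⟩ := isOpen_prod_iff.1 hU _ _ hγa
  obtain ⟨v', hv', rfl⟩ := isOpen_induced_iff.1 hv
  obtain ⟨l, hlγ, hlv⟩ := exists_Ioc_subset_of_mem_nhds (hv'.mem_nhds hγv)
    ⟨longRayZero, (longRayZero_le _).lt_of_ne hγ.symm⟩
  obtain ⟨ε, hε, hεw⟩ := Metric.isOpen_iff.1 hw a haw
  obtain ⟨n, hn⟩ := exists_nat_one_div_lt hε
  refine ⟨(ofLex l).1, lt_ordPt_iff.1 hlγ, n, fun x t hlx hxγ hta => hvw ⟨hlv ⟨?_, ?_⟩, hεw ?_⟩⟩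
  · exact (lt_ordPt_iff.2 hlx).trans_le (ordPt_le_iff.2 le_rfl)
  · exact (lt_ordPt_iff.2 hxγ).le
  · rw [Metric.mem_ball, Subtype.dist_eq, Real.dist_eq]
    exact hta.trans hn

/-- If `U` is an open subset of `L₊ × [0,1]` whose intersection with the horizontal line
`L₊ × {a}` is stationary, then `U` contains `[α,ω₁) × ((a - 1/n, a + 1/n) ∩ [0,1])` for some
`α ∈ ω₁` and some `n ≥ 1`. -/
theorem open_superset_of_stationary_line (U : Set (LongRayPlus × unitInterval))
    (hU : IsOpen U) (a : unitInterval)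
    (hstat : IsStationary'
      {α : Omega1 | ∃ h : ordPt α ≠ longRayZero, ((⟨ordPt α, h⟩ : LongRayPlus), a) ∈ U}) :
    ∃ (α : Omega1) (n : ℕ), 1 ≤ n ∧ ∀ (x : LongRayPlus) (t : unitInterval),
      ordPt α ≤ x.1 → |(t : ℝ) - (a : ℝ)| < 1 / n → (x, t) ∈ U := by
  by_contra! hcon
  choose X T hαX hTa hXU using fun (α : Omega1) (n : ℕ) => hcon α (n + 1) (Nat.le_add_left 1 n)
  choose f hf using fun α : Omega1 =>
    Omega1.exists_gt_of_countable (ι := Option ℕ) fun i => i.elim α fun n => (ofLex (X α n).1).1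
  obtain ⟨γ, ⟨hγ, hγU⟩, hγf⟩ := hstat _ (Omega1.isClub'_closurePoints f)
  obtain ⟨β, hβγ, n, hβU⟩ := exists_forall_mem_of_mem_isOpen hU hγ hγU
  -- Since `γ` is closed under `f`, the counterexamples indexed by `f β` lie between `β` and `γ`.
  refine hXU (f β) n (hβU _ _ ?_ ?_ ?_)
  · exact (hf β none).trans_le (ordPt_le_iff.1 (hαX _ n))
  · exact (hf (f β) (some n)).trans (hγf _ (hγf β hβγ))
  · simpa using hTa (f β) n
end
end
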